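/- Let M = [a,b) and N = [c,d) be interval modules (0 ≤ a < b, 0 ≤ c < d) with m₁ = m₂, and set D = m₁ and E = max{|a−d|, |b−c|}. Then D < E and: (a) for every ε with D ≤ ε < E, exactly one of Hom(M, N·ε), Hom(N, M·ε) is nonzero, and Hom(M, M·2ε) = Hom(N, N·2ε) = 0; (b) for every ε ≥ E, all four spaces Hom(M, N·ε), Hom(N, M·ε), Hom(M, M·2ε), Hom(N, N·2ε) are zero. (This expresses that for interval modules the progression of varieties of ε-interleavings in the case m₁ = m₂ is: coordinate axis, origin.) -/

import Mathlib

open scoped NNReal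

/-- A persistence module: a functor from `[0,∞)` to real vector spaces. -/
structure PM where
  V : ℝ≥0 → Type
  [grp : ∀ x, AddCommGroup (V x)]
  [mod : ∀ x, Module ℝ (V x)]
  map : ∀ {x y : ℝ≥0}, x ≤ y → (V x →ₗ[ℝ] V y)
  map_id : ∀ x : ℝ≥0, map (le_refl x) = LinearMap.id
  map_comp : ∀ {x y z : ℝ≥0} (h1 : x ≤ y) (h2 : y ≤ z),
    (map h2).comp (map h1) = map (h1.trans h2)

attribute [instance] PM.grp PM.mod

/-- A morphism of persistence modules. -/
structure PM.Hom (M N : PM) where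
  app : ∀ x : ℝ≥0, M.V x →ₗ[ℝ] N.V x
  comm : ∀ {x y : ℝ≥0} (h : x ≤ y), (app y).comp (M.map h) = (N.map h).comp (app x)

/-- The shifted module `M·ε`. -/
def PM.shift (M : PM) (ε : ℝ≥0) : PM where
  V x := M.V (x + ε)
  grp x := inferInstance
  mod x := inferInstance
  map h := M.map (add_le_add h (le_refl ε))
  map_id x := M.map_id (x + ε)
  map_comp h1 h2 := M.map_comp _ _

noncomputable def intervalSub (α β : ℝ) (x : ℝ≥0) : Submodule ℝ ℝ :=
  if α ≤ (x : ℝ) ∧ (x : ℝ) < β then ⊤ else ⊥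

/-- The interval module `[α,β)`. -/
noncomputable def intervalModule (α β : ℝ) : PM where
  V x := ↥(intervalSub α β x)
  grp x := inferInstance
  mod x := inferInstance
  map {x y} h := LinearMap.codRestrict _
      ((if α ≤ (x : ℝ) ∧ (y : ℝ) < β then (1 : ℝ) else 0) • (intervalSub α β x).subtype)
      (by
        intro v
        by_cases hy : α ≤ (y : ℝ) ∧ (y : ℝ) < β
        · simp [intervalSub, hy]
        · have hc : ¬(α ≤ (x : ℝ) ∧ (y : ℝ) < β) := by
            intro hc
            exact hy ⟨le_trans hc.1 (by exact_mod_cast h), hc.2⟩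
          rw [if_neg hc, zero_smul, LinearMap.zero_apply]; exact Submodule.zero_mem _)
  map_id x := by
    ext v
    by_cases hx : α ≤ (x : ℝ) ∧ (x : ℝ) < β
    · simp [hx]
    · have hv : (v : ℝ) = 0 := by
        have h2 := v.2
        simp only [intervalSub, if_neg hx, Submodule.mem_bot] at h2
        exact h2
      simp [hx, hv]
  map_comp {x y z} h1 h2 := by
    ext v
    by_cases hC : α ≤ (x : ℝ) ∧ (z : ℝ) < β
    · have hA : α ≤ (x : ℝ) ∧ (y : ℝ) < β :=
        ⟨hC.1, lt_of_le_of_lt (by exact_mod_cast h2) hC.2⟩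
      have hB : α ≤ (y : ℝ) ∧ (z : ℝ) < β :=
        ⟨le_trans hC.1 (by exact_mod_cast h1), hC.2⟩
      simp [hA, hB, hC]
    · rcases not_and_or.mp hC with hx | hz
      · have hA : ¬(α ≤ (x : ℝ) ∧ (y : ℝ) < β) := fun h => hx h.1
        simp [hA, hC]
        split_ifs <;> simp
      · have hB : ¬(α ≤ (y : ℝ) ∧ (z : ℝ) < β) := fun h => hz h.2
        simp [hB, hC]

/-- `Hom(M,N) ≠ {0}`: there is a nonzero morphism from `M` to `N`. -/
def HomNeZero (M N : PM) : Prop := ∃ F : PM.Hom M N, ∃ x, F.app x ≠ 0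

/-- `S_{M,N} = {x ≥ 0 : Hom(M, N·x) ≠ {0}}`. -/
noncomputable def Sset (M N : PM) : Set ℝ :=
  {x : ℝ | 0 ≤ x ∧ HomNeZero M (N.shift x.toNNReal)}

/-- The canonical morphism `Π_M^{M·τ} : M → M·τ`. -/
def PM.pi (M : PM) (τ : ℝ≥0) : M.Hom (M.shift τ) where
  app x := M.map le_self_add
  comm {x y} h := by
    show (M.map le_self_add).comp (M.map h) =
      (M.map (add_le_add h (le_refl τ))).comp (M.map le_self_add)
    rw [M.map_comp, M.map_comp]

/-- The pair `(Φ, Ψ)` is an `ε`-interleaving between `M` and `N`: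
`(Ψ·ε) ∘ Φ = Π_M^{M·2ε}` and `(Φ·ε) ∘ Ψ = Π_N^{N·2ε}` (expressed pointwise). -/
def IsInterleaving (M N : PM) (ε : ℝ≥0)
    (Φ : M.Hom (N.shift ε)) (Ψ : N.Hom (M.shift ε)) : Prop :=
  (∀ x : ℝ≥0, (Ψ.app (x + ε)).comp (Φ.app x) =
      M.map (le_self_add.trans le_self_add : x ≤ x + ε + ε)) ∧
  (∀ x : ℝ≥0, (Φ.app (x + ε)).comp (Ψ.app x) =
      N.map (le_self_add.trans le_self_add : x ≤ x + ε + ε))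
/-!
A nonzero morphism `[a, b) → [c, d)·t` exists exactly when `c ≤ a + t < d ≤ b + t`: it is a
scalar on the overlap, and naturality forces the shifted target to start and end no later than
the source. Once `ε ≥ D` the outer two conditions hold for both pairs, so
`Hom(M, N·ε) ≠ 0 ↔ ε < d - a` and `Hom(N, M·ε) ≠ 0 ↔ ε < b - c`, while the self-maps by `2ε`
vanish because `2ε ≥ 2 m₂` is at least both lengths. Finally `E = max (d - a) (b - c)`, whereas
`m₁ = m₂` forces `min (d - a) (b - c) ≤ D`.
-/

namespace PM.Hom

variable {M N : PM} (F : M.Hom N)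

theorem app_eq_zero_of_map_surjective {x y : ℝ≥0} (h : x ≤ y)
    (hs : Function.Surjective (M.map h)) (hx : F.app x = 0) : F.app y = 0 := by
  refine LinearMap.ext fun v => ?_
  obtain ⟨w, rfl⟩ := hs v
  have := LinearMap.congr_fun (F.comm h) w
  simp only [LinearMap.comp_apply] at this
  simp [this, hx]

theorem app_eq_zero_of_map_injective {x y : ℝ≥0} (h : x ≤ y)
    (hi : Function.Injective (N.map h)) (hM : M.map h = 0) : F.app x = 0 := by
  refine LinearMap.ext fun v => hi ?_
  have := LinearMap.congr_fun (F.comm h) v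
  simp only [LinearMap.comp_apply, hM, LinearMap.zero_apply, map_zero] at this
  simp [← this]

end PM.Hom

theorem max_abs_sub_eq_max_sub {a b c d : ℝ} (hab : a < b) (hcd : c < d) :
    max |a - d| |b - c| = max (d - a) (b - c) := by
  rcases abs_cases (a - d) with h1 | h1 <;> rcases abs_cases (b - c) with h2 | h2 <;>
    rw [h1.1, h2.1] <;> grind

theorem max_half_sub_lt_max_sub {a b c d : ℝ} (hab : a < b) (hcd : c < d) :
    max ((b - a) / 2) ((d - c) / 2) < max (d - a) (b - c) := by
  grind

/- If, say, `|a - c| = c - a` is the larger of the two, then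
`b - c = (b - a) - (c - a) ≤ 2 m - m`, where `m = max |a - c| |b - d|`. -/
theorem min_sub_le_of_max_half_sub_le {a b c d : ℝ}
    (h : max ((b - a) / 2) ((d - c) / 2) ≤ max |a - c| |b - d|) :
    min (d - a) (b - c) ≤ max |a - c| |b - d| := by
  rcases abs_cases (a - c) with h1 | h1 <;> rcases abs_cases (b - d) with h2 | h2 <;>
    rw [h1.1, h2.1] at h ⊢ <;> grind

namespace intervalModule

variable {α β : ℝ}

theorem map_val {x y : ℝ≥0} (h : x ≤ y) (v : (intervalModule α β).V x) :
    ((intervalModule α β).map h v : intervalSub α β y).val =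
      (if α ≤ (x : ℝ) ∧ (y : ℝ) < β then 1 else 0) * (v : intervalSub α β x).val :=
  rfl

theorem mem {x : ℝ≥0} (hx : α ≤ (x : ℝ) ∧ (x : ℝ) < β) (r : ℝ) : r ∈ intervalSub α β x := by
  simp [intervalSub, hx]

theorem val_eq_zero {x : ℝ≥0} (hx : ¬(α ≤ (x : ℝ) ∧ (x : ℝ) < β))
    (v : (intervalModule α β).V x) : (v : intervalSub α β x).val = 0 := by
  simpa [intervalSub, hx] using v.2

theorem subsingleton {x : ℝ≥0} (hx : ¬(α ≤ (x : ℝ) ∧ (x : ℝ) < β)) :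
    Subsingleton ((intervalModule α β).V x) :=
  ⟨fun v w => Subtype.ext <| (val_eq_zero hx v).trans (val_eq_zero hx w).symm⟩

theorem map_bijective {x y : ℝ≥0} (h : x ≤ y) (hx : α ≤ (x : ℝ)) (hy : (y : ℝ) < β) :
    Function.Bijective ((intervalModule α β).map h) := by
  have hxy : (x : ℝ) ≤ y := h
  refine ⟨fun v w hvw => Subtype.ext ?_,
    fun w => ⟨⟨(w : intervalSub α β y).val, mem ⟨hx, by linarith⟩ _⟩, Subtype.ext ?_⟩⟩
  · simpa [map_val, hx, hy] using congrArg Subtype.val hvw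
  · exact (map_val h _).trans (by simp [hx, hy])

theorem map_eq_zero {x y : ℝ≥0} (h : x ≤ y) (hy : β ≤ (y : ℝ)) :
    (intervalModule α β).map h = 0 :=
  LinearMap.ext fun v => Subtype.ext <| (map_val h v).trans <| by simp [hy.not_gt]; rfl

noncomputable def shiftHom (a b c d : ℝ) (t : ℝ≥0) (hc : c ≤ a + t) (hd : d ≤ b + t) :
    (intervalModule a b).Hom ((intervalModule c d).shift t) where
  app x := (LinearMap.codRestrict (intervalSub c d (x + t))
    ((if c ≤ ((x + t : ℝ≥0) : ℝ) ∧ ((x + t : ℝ≥0) : ℝ) < d then (1 : ℝ) else 0) •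
      (intervalSub a b x).subtype)
    fun v => by
      split_ifs with hx
      · exact mem hx _
      · rw [zero_smul, LinearMap.zero_apply]
        exact (intervalSub c d (x + t)).zero_mem :
    intervalSub a b x →ₗ[ℝ] intervalSub c d (x + t))
  comm {x y} h := by
    refine LinearMap.ext fun v => Subtype.ext ?_
    by_cases hv : a ≤ (x : ℝ) ∧ (x : ℝ) < b
    · have hxy : (x : ℝ) ≤ y := h
      change _ * ((intervalModule a b).map h v : intervalSub a b y).val = _ * (_ * _)
      rw [map_val]
      simp only [NNReal.coe_add]
      erw [Submodule.subtype_apply]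
      split_ifs <;> grind
    · have hv0 : v = 0 := Subtype.ext (val_eq_zero hv v)
      simp [hv0]

/- Naturality along `a ≤ x` (where `M(a ≤ x)` is onto) and along `x ≤ b` (where `M(x ≤ b) = 0`)
propagates the vanishing of `F` at the ends of `[a, b)` to every `x`. -/
theorem le_of_homNeZero_shift {a b c d : ℝ} (ha : 0 ≤ a) (hab : a < b) {t : ℝ≥0}
    (hF : HomNeZero (intervalModule a b) ((intervalModule c d).shift t)) :
    c ≤ a + t ∧ a + t < d ∧ d ≤ b + t := by
  have ha' : ((a.toNNReal : ℝ≥0) : ℝ) = a := Real.coe_toNNReal a ha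
  obtain ⟨F, x, hFx⟩ := hF
  have hxt : ((x + t : ℝ≥0) : ℝ) = x + t := NNReal.coe_add x t
  have hsrc : a ≤ (x : ℝ) ∧ (x : ℝ) < b := by
    by_contra hx
    have := subsingleton hx
    exact hFx (LinearMap.ext fun v => by rw [@Subsingleton.elim _ this v 0, map_zero]; rfl)
  have htgt : c ≤ (x : ℝ) + t ∧ (x : ℝ) + t < d := by
    rw [← hxt]
    by_contra hx
    have := subsingleton hx
    exact hFx (LinearMap.ext fun v => @Subsingleton.elim _ this _ _)
  refine ⟨?_, by linarith, ?_⟩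
  · by_contra hlt
    have hax : a.toNNReal ≤ x := by rw [← NNReal.coe_le_coe, ha']; exact hsrc.1
    refine hFx (F.app_eq_zero_of_map_surjective hax (map_bijective hax ha'.ge hsrc.2).2 ?_)
    have : Subsingleton ((intervalModule c d).V (a.toNNReal + t)) :=
      subsingleton (by push_cast [ha']; intro h; linarith [h.1])
    exact LinearMap.ext fun v => @Subsingleton.elim _ this _ _
  · by_contra hlt
    have hb' : ((b.toNNReal : ℝ≥0) : ℝ) = b := Real.coe_toNNReal b (ha.trans hab.le)
    have hxb : x ≤ b.toNNReal := by rw [← NNReal.coe_le_coe, hb']; exact hsrc.2.le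
    have hinj := map_bijective (α := c) (β := d) (add_le_add hxb (le_refl t))
      (by rw [hxt]; exact htgt.1) (by push_cast [hb']; linarith)
    exact hFx (F.app_eq_zero_of_map_injective hxb hinj.1 (map_eq_zero hxb hb'.ge))

theorem homNeZero_shift {a b c d : ℝ} (ha : 0 ≤ a) (hab : a < b) {t : ℝ≥0}
    (hca : c ≤ a + t) (had : a + t < d) (hdb : d ≤ b + t) :
    HomNeZero (intervalModule a b) ((intervalModule c d).shift t) := by
  have ha' : ((a.toNNReal : ℝ≥0) : ℝ) = a := Real.coe_toNNReal a ha
  refine ⟨shiftHom a b c d t hca hdb, a.toNNReal, fun h0 => ?_⟩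
  have hsrc : a ≤ ((a.toNNReal : ℝ≥0) : ℝ) ∧ ((a.toNNReal : ℝ≥0) : ℝ) < b := by
    rw [ha']; exact ⟨le_rfl, hab⟩
  have htgt : c ≤ ((a.toNNReal + t : ℝ≥0) : ℝ) ∧ ((a.toNNReal + t : ℝ≥0) : ℝ) < d := by
    push_cast [ha']; exact ⟨hca, had⟩
  have := congrArg Subtype.val (LinearMap.congr_fun h0 ⟨1, mem hsrc 1⟩)
  change (if _ then (1 : ℝ) else 0) * 1 = 0 at this
  rw [if_pos htgt] at this
  simp at this

theorem homNeZero_shift_iff {a b c d : ℝ} (ha : 0 ≤ a) (hab : a < b) (t : ℝ≥0) :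
    HomNeZero (intervalModule a b) ((intervalModule c d).shift t) ↔
      c ≤ a + t ∧ a + t < d ∧ d ≤ b + t :=
  ⟨le_of_homNeZero_shift ha hab, fun ⟨hca, had, hdb⟩ => homNeZero_shift ha hab hca had hdb⟩

theorem homNeZero_shift_iff_of_le {a b c d t : ℝ} (ha : 0 ≤ a) (hab : a < b) (ht : 0 ≤ t)
    (hca : c - a ≤ t) (hdb : d - b ≤ t) :
    HomNeZero (intervalModule a b) ((intervalModule c d).shift t.toNNReal) ↔ t < d - a := by
  rw [homNeZero_shift_iff ha hab, Real.coe_toNNReal t ht]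
  constructor
  · rintro ⟨-, had, -⟩
    linarith
  · intro h
    exact ⟨by linarith, by linarith, by linarith⟩

theorem not_homNeZero_shift_of_le {a b c d t : ℝ} (ha : 0 ≤ a) (hab : a < b)
    (hda : d - a ≤ t) :
    ¬HomNeZero (intervalModule a b) ((intervalModule c d).shift t.toNNReal) := by
  rw [homNeZero_shift_iff ha hab]
  rintro ⟨-, had, -⟩
  linarith [Real.le_coe_toNNReal t]

end intervalModule

theorem stmt1 (a b c d : ℝ) (ha : 0 ≤ a) (hab : a < b) (hc : 0 ≤ c) (hcd : c < d)
    (m₁ m₂ D E : ℝ)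
    (hm1 : m₁ = max |a - c| |b - d|) (hm2 : m₂ = max ((b - a) / 2) ((d - c) / 2))
    (hD : D = m₁) (hE : E = max |a - d| |b - c|) (hm : m₁ = m₂) :
    D < E ∧
    (∀ ε : ℝ, D ≤ ε → ε < E →
      Xor' (HomNeZero (intervalModule a b) ((intervalModule c d).shift (ε).toNNReal)) (HomNeZero (intervalModule c d) ((intervalModule a b).shift (ε).toNNReal)) ∧
      ¬ HomNeZero (intervalModule a b) ((intervalModule a b).shift (2*ε).toNNReal) ∧ ¬ HomNeZero (intervalModule c d) ((intervalModule c d).shift (2*ε).toNNReal)) ∧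
    (∀ ε : ℝ, E ≤ ε →
      ¬ HomNeZero (intervalModule a b) ((intervalModule c d).shift (ε).toNNReal) ∧ ¬ HomNeZero (intervalModule c d) ((intervalModule a b).shift (ε).toNNReal) ∧
      ¬ HomNeZero (intervalModule a b) ((intervalModule a b).shift (2*ε).toNNReal) ∧ ¬ HomNeZero (intervalModule c d) ((intervalModule c d).shift (2*ε).toNNReal)) := by
  have hE' : E = max (d - a) (b - c) := hE.trans (max_abs_sub_eq_max_sub hab hcd)
  have hD₁ : D = max |a - c| |b - d| := hD.trans hm1
  have hD₂ : D = max ((b - a) / 2) ((d - c) / 2) := hD.trans (hm.trans hm2)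
  have hDE : D < E := hD₂ ▸ hE' ▸ max_half_sub_lt_max_sub hab hcd
  have hmin : min (d - a) (b - c) ≤ D := hD₁ ▸ min_sub_le_of_max_half_sub_le (hD₂.symm.trans hD₁).le
  obtain ⟨hac, hbd⟩ : |a - c| ≤ D ∧ |b - d| ≤ D := max_le_iff.mp hD₁.ge
  obtain ⟨hba, hdc⟩ : (b - a) / 2 ≤ D ∧ (d - c) / 2 ≤ D := max_le_iff.mp hD₂.ge
  have hD0 : 0 ≤ D := (abs_nonneg _).trans hac
  rw [abs_le] at hac hbd
  have hself : ∀ ε, D ≤ ε →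
      ¬HomNeZero (intervalModule a b) ((intervalModule a b).shift (2 * ε).toNNReal) ∧
      ¬HomNeZero (intervalModule c d) ((intervalModule c d).shift (2 * ε).toNNReal) :=
    fun ε hε => ⟨intervalModule.not_homNeZero_shift_of_le ha hab (by linarith),
      intervalModule.not_homNeZero_shift_of_le hc hcd (by linarith)⟩
  refine ⟨hDE, fun ε hDε hεE => ⟨?_, hself ε hDε⟩,
    fun ε hEε => ⟨?_, ?_, hself ε (hDE.le.trans hEε)⟩⟩
  · have hε := hD0.trans hDε
    rw [intervalModule.homNeZero_shift_iff_of_le ha hab hε (by linarith) (by linarith),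
      intervalModule.homNeZero_shift_iff_of_le hc hcd hε (by linarith) (by linarith)]
    have hhi := lt_max_iff.mp (hE' ▸ hεE)
    rcases min_le_iff.mp (hmin.trans hDε) with hl | hl
    · exact Or.inr ⟨hhi.resolve_left (by linarith), by linarith⟩
    · exact Or.inl ⟨hhi.resolve_right (by linarith), by linarith⟩
  · exact intervalModule.not_homNeZero_shift_of_le ha hab ((le_max_left _ _).trans (hE' ▸ hEε))
  · exact intervalModule.not_homNeZero_shift_of_le hc hcd ((le_max_right _ _).trans (hE' ▸ hEε))
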